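/- Let ℓ be a probability measure on a finite set X and ω a probability measure on X. Then sup over f : X → ℝ of ( ∑_a (f(a) − log ∑_b e^{f(b)}ℓ[b])·ω[a] ) equals the relative entropy H(ω‖ℓ) = ∑_a ω[a]·log(ω[a]/ℓ[a]) if ω ≪ ℓ, and equals +∞ otherwise. -/

import Mathlib

/-! When `ω ≪ ℓ`, Jensen's inequality for `log` with weights `ω` on the support of `ω` gives
`∑ f ω ≤ H(ω‖ℓ) + log ∑ e^f ℓ` for every `f`. Equality is approached by the functions equal to
`log (ω / ℓ)` on the support of `ω` and to `log ε` off it, whose partition function is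
`1 + ε ℓ(supp ωᶜ)`. If instead `ℓ a = 0 < ω a`, raising `f a` does not change the partition
function but increases the functional linearly. -/

open Real Finset

open Filter Topology

theorem sum_mul_log_div_le_log_sum {ι : Type*} {s : Finset ι} {p q : ι → ℝ}
    (hp : ∀ i ∈ s, 0 < p i) (hq : ∀ i ∈ s, 0 < q i) (hpsum : ∑ i ∈ s, p i = 1) :
    ∑ i ∈ s, p i * log (q i / p i) ≤ log (∑ i ∈ s, q i) := by
  have jensen := strictConcaveOn_log_Ioi.concaveOn.le_map_sum (fun i hi => (hp i hi).le) hpsum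
    (p := fun i => q i / p i) fun i hi => Set.mem_Ioi.mpr (div_pos (hq i hi) (hp i hi))
  simp only [smul_eq_mul] at jensen
  rwa [sum_congr rfl fun i hi => mul_div_cancel₀ (q i) (hp i hi).ne'] at jensen

theorem pos_of_absolutelyContinuous {X : Type*} {ℓ ω : X → ℝ} (hℓ : ∀ a, 0 ≤ ℓ a)
    (habs : ∀ a, ℓ a = 0 → ω a = 0) {a : X} (ha : 0 < ω a) : 0 < ℓ a :=
  (hℓ a).lt_of_ne fun h => ha.ne' (habs a h.symm)

section DonskerVaradhan

variable {X : Type*} [Fintype X] (ℓ ω : X → ℝ)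

noncomputable def relEntropy : ℝ :=
  ∑ a ∈ univ.filter (fun a => 0 < ω a), ω a * log (ω a / ℓ a)

noncomputable def dvFunctional (f : X → ℝ) : ℝ :=
  ∑ a, (f a - log (∑ b, exp (f b) * ℓ b)) * ω a

variable {ℓ ω}

theorem dvFunctional_eq_sum_sub_log (hωsum : ∑ a, ω a = 1) (f : X → ℝ) :
    dvFunctional ℓ ω f = ∑ a, f a * ω a - log (∑ b, exp (f b) * ℓ b) := by
  rw [dvFunctional]
  simp only [sub_mul, sum_sub_distrib, ← mul_sum, hωsum, mul_one]

theorem sum_filter_pos_mul (hω : ∀ a, 0 ≤ ω a) (g : X → ℝ) :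
    ∑ a ∈ univ.filter (fun a => 0 < ω a), g a * ω a = ∑ a, g a * ω a :=
  sum_filter_of_ne fun a _ h => (hω a).lt_of_ne' (right_ne_zero_of_mul h)

theorem sum_filter_pos (hω : ∀ a, 0 ≤ ω a) (hωsum : ∑ a, ω a = 1) :
    ∑ a ∈ univ.filter (fun a => 0 < ω a), ω a = 1 :=
  hωsum ▸ sum_filter_of_ne fun a _ h => (hω a).lt_of_ne' h

theorem sum_mul_le_relEntropy_add_log (hℓ : ∀ a, 0 ≤ ℓ a) (hω : ∀ a, 0 ≤ ω a)
    (hωsum : ∑ a, ω a = 1) (habs : ∀ a, ℓ a = 0 → ω a = 0) (f : X → ℝ) :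
    ∑ a, f a * ω a ≤ relEntropy ℓ ω + log (∑ b, exp (f b) * ℓ b) := by
  set T := univ.filter (fun a => 0 < ω a)
  have hωT : ∀ a ∈ T, 0 < ω a := fun a ha => (mem_filter.mp ha).2
  have hℓT : ∀ a ∈ T, 0 < ℓ a := fun a ha => pos_of_absolutelyContinuous hℓ habs (hωT a ha)
  have hsplit : ∀ a ∈ T, f a * ω a =
      ω a * log (ω a / ℓ a) + ω a * log (exp (f a) * ℓ a / ω a) := by
    intro a ha
    rw [← mul_add, ← log_mul (div_pos (hωT a ha) (hℓT a ha)).ne'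
      (div_pos (mul_pos (exp_pos _) (hℓT a ha)) (hωT a ha)).ne']
    have hcancel : ω a / ℓ a * (exp (f a) * ℓ a / ω a) = exp (f a) := by
      field_simp [(hωT a ha).ne', (hℓT a ha).ne']
    rw [hcancel, log_exp, mul_comm]
  calc ∑ a, f a * ω a
      = ∑ a ∈ T, f a * ω a := (sum_filter_pos_mul hω f).symm
    _ = relEntropy ℓ ω + ∑ a ∈ T, ω a * log (exp (f a) * ℓ a / ω a) := by
      rw [sum_congr rfl hsplit, sum_add_distrib, relEntropy]
    _ ≤ relEntropy ℓ ω + log (∑ a ∈ T, exp (f a) * ℓ a) := by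
      gcongr
      exact sum_mul_log_div_le_log_sum hωT (fun a ha => mul_pos (exp_pos _) (hℓT a ha))
        (sum_filter_pos hω hωsum)
    _ ≤ relEntropy ℓ ω + log (∑ b, exp (f b) * ℓ b) := by
      gcongr
      · exact sum_pos (fun a ha => mul_pos (exp_pos _) (hℓT a ha))
          (nonempty_of_sum_ne_zero (sum_filter_pos hω hωsum ▸ one_ne_zero))
      · exact fun b _ _ => mul_nonneg (exp_pos _).le (hℓ b)
      · exact subset_univ T

theorem dvFunctional_le_relEntropy (hℓ : ∀ a, 0 ≤ ℓ a) (hω : ∀ a, 0 ≤ ω a)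
    (hωsum : ∑ a, ω a = 1) (habs : ∀ a, ℓ a = 0 → ω a = 0) (f : X → ℝ) :
    dvFunctional ℓ ω f ≤ relEntropy ℓ ω := by
  rw [dvFunctional_eq_sum_sub_log hωsum]
  linarith [sum_mul_le_relEntropy_add_log hℓ hω hωsum habs f]

theorem dvFunctional_ite_log (hℓ : ∀ a, 0 ≤ ℓ a) (hω : ∀ a, 0 ≤ ω a)
    (hωsum : ∑ a, ω a = 1) (habs : ∀ a, ℓ a = 0 → ω a = 0) {ε : ℝ} (hε : 0 < ε) :
    dvFunctional ℓ ω (fun a => if 0 < ω a then log (ω a / ℓ a) else log ε) =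
      relEntropy ℓ ω - log (1 + ε * ∑ a ∈ univ.filter (fun a => ¬ 0 < ω a), ℓ a) := by
  have hlinear : ∑ a, (if 0 < ω a then log (ω a / ℓ a) else log ε) * ω a = relEntropy ℓ ω := by
    rw [← sum_filter_pos_mul hω, relEntropy]
    exact sum_congr rfl fun a ha => by rw [if_pos (mem_filter.mp ha).2, mul_comm]
  have hpartition : ∑ b, exp (if 0 < ω b then log (ω b / ℓ b) else log ε) * ℓ b =
      1 + ε * ∑ a ∈ univ.filter (fun a => ¬ 0 < ω a), ℓ a := by
    rw [← sum_filter_add_sum_filter_not univ (fun a => 0 < ω a), mul_sum]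
    congr 1
    · rw [← sum_filter_pos hω hωsum]
      refine sum_congr rfl fun a ha => ?_
      have hωa := (mem_filter.mp ha).2
      rw [if_pos hωa, exp_log (div_pos hωa (pos_of_absolutelyContinuous hℓ habs hωa)),
        div_mul_cancel₀ _ (pos_of_absolutelyContinuous hℓ habs hωa).ne']
    · exact sum_congr rfl fun a ha => by rw [if_neg (mem_filter.mp ha).2, exp_log hε]
  rw [dvFunctional_eq_sum_sub_log hωsum, hlinear, hpartition]

theorem isLUB_range_dvFunctional (hℓ : ∀ a, 0 ≤ ℓ a) (hω : ∀ a, 0 ≤ ω a)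
    (hωsum : ∑ a, ω a = 1) (habs : ∀ a, ℓ a = 0 → ω a = 0) :
    IsLUB (Set.range (dvFunctional ℓ ω)) (relEntropy ℓ ω) := by
  refine ⟨Set.forall_mem_range.mpr (dvFunctional_le_relEntropy hℓ hω hωsum habs), fun u hu => ?_⟩
  set c := ∑ a ∈ univ.filter (fun a => ¬ 0 < ω a), ℓ a
  have hlim : Tendsto (fun ε => relEntropy ℓ ω - log (1 + ε * c)) (𝓝[>] 0)
      (𝓝 (relEntropy ℓ ω)) := by
    have hcont : ContinuousAt (fun ε => relEntropy ℓ ω - log (1 + ε * c)) 0 := by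
      fun_prop (disch := simp)
    simpa using hcont.tendsto.mono_left nhdsWithin_le_nhds
  refine le_of_tendsto hlim (eventually_nhdsWithin_of_forall fun ε hε => ?_)
  rw [← dvFunctional_ite_log hℓ hω hωsum habs hε]
  exact hu ⟨_, rfl⟩

theorem dvFunctional_single [DecidableEq X] (hωsum : ∑ a, ω a = 1) {a₀ : X} (hℓ₀ : ℓ a₀ = 0)
    (t : ℝ) :
    dvFunctional ℓ ω (Pi.single a₀ t) = t * ω a₀ - log (∑ b, ℓ b) := by
  have hpartition : ∑ b, exp ((Pi.single a₀ t : X → ℝ) b) * ℓ b = ∑ b, ℓ b := by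
    refine sum_congr rfl fun b _ => ?_
    rcases eq_or_ne b a₀ with rfl | hb
    · simp [hℓ₀]
    · simp [hb]
  rw [dvFunctional_eq_sum_sub_log hωsum, hpartition]
  simp [Pi.single_apply]

theorem not_bddAbove_range_dvFunctional (hωsum : ∑ a, ω a = 1) {a₀ : X} (hℓ₀ : ℓ a₀ = 0)
    (hω₀ : ω a₀ ≠ 0) : ¬ BddAbove (Set.range (dvFunctional ℓ ω)) := by
  classical
  rintro ⟨u, hu⟩
  have hle := hu ⟨Pi.single a₀ ((u + 1 + log (∑ b, ℓ b)) / ω a₀), rfl⟩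
  rw [dvFunctional_single hωsum hℓ₀, div_mul_cancel₀ _ hω₀] at hle
  linarith

end DonskerVaradhan

theorem donsker_varadhan_finite_general {X : Type*} [Fintype X]
    (ℓ ω : X → ℝ) (hℓ : ∀ a, 0 ≤ ℓ a)
    (hω : ∀ a, 0 ≤ ω a) (hωsum : ∑ a, ω a = 1) :
    ((∀ a, ℓ a = 0 → ω a = 0) →
      IsLUB {z : ℝ | ∃ f : X → ℝ,
          z = ∑ a, (f a - Real.log (∑ b, Real.exp (f b) * ℓ b)) * ω a}
        (∑ a ∈ Finset.univ.filter (fun a => 0 < ω a),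
          ω a * Real.log (ω a / ℓ a))) ∧
    (¬ (∀ a, ℓ a = 0 → ω a = 0) →
      ¬ BddAbove {z : ℝ | ∃ f : X → ℝ,
          z = ∑ a, (f a - Real.log (∑ b, Real.exp (f b) * ℓ b)) * ω a}) := by
  have hrange : {z : ℝ | ∃ f : X → ℝ,
      z = ∑ a, (f a - Real.log (∑ b, Real.exp (f b) * ℓ b)) * ω a} =
        Set.range (dvFunctional ℓ ω) :=
    Set.ext fun z => exists_congr fun f => eq_comm
  rw [hrange]
  refine ⟨isLUB_range_dvFunctional hℓ hω hωsum, fun habs => ?_⟩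
  push Not at habs
  obtain ⟨a₀, hℓ₀, hω₀⟩ := habs
  exact not_bddAbove_range_dvFunctional hωsum hℓ₀ hω₀

theorem donsker_varadhan_finite {X : Type*} [Fintype X]
    (ℓ ω : X → ℝ) (hℓ : ∀ a, 0 ≤ ℓ a) (hℓsum : ∑ a, ℓ a = 1)
    (hω : ∀ a, 0 ≤ ω a) (hωsum : ∑ a, ω a = 1) :
    ((∀ a, ℓ a = 0 → ω a = 0) →
      IsLUB {z : ℝ | ∃ f : X → ℝ,
          z = ∑ a, (f a - Real.log (∑ b, Real.exp (f b) * ℓ b)) * ω a}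
        (∑ a ∈ Finset.univ.filter (fun a => 0 < ω a),
          ω a * Real.log (ω a / ℓ a))) ∧
    (¬ (∀ a, ℓ a = 0 → ω a = 0) →
      ¬ BddAbove {z : ℝ | ∃ f : X → ℝ,
          z = ∑ a, (f a - Real.log (∑ b, Real.exp (f b) * ℓ b)) * ω a}) :=
  donsker_varadhan_finite_general ℓ ω hℓ hω hωsum
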